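/- arXiv:math/0407491 — 2 statements merged into one kernel-verified Lean document; each statement's English description precedes it below -/
import Mathlib

section
/- Suppose that the group G = {g ∈ GL_d(ℤ) : g(V) = V} of lattice automorphisms preserving V has no nonzero fixed vector in ℝ^d (i.e., if x ∈ ℝ^d satisfies g(x) = x for all g ∈ G, then x = 0). Then V is semisimple: R = −R. (For V the rays of a complete fan this is the statement that if the automorphism group of the fan has no non-zero fixpoints, then Aut(X) is reductive.) -/
open Finset

/-- The pairing `⟨v, m⟩ = ∑ i, v i * m i` between `N = ℤ^d` and `M = ℤ^d`. -/
def pairZ {d : ℕ} (v m : Fin d → ℤ) : ℤ := ∑ i, v i * m i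

/-- `m` is a Demazure root of the finite set `V ⊆ N`: `⟨v, m⟩ = -1` for some `v ∈ V`
and `⟨v', m⟩ ≥ 0` for all other `v' ∈ V`. -/
def IsDemazureRoot {d : ℕ} (V : Finset (Fin d → ℤ)) (m : Fin d → ℤ) : Prop :=
  ∃ v ∈ V, pairZ v m = -1 ∧ ∀ v' ∈ V, v' ≠ v → 0 ≤ pairZ v' m

/-- The set of nonnegative real combinations of elements of `V` is all of `ℝ^d`. -/
def PosSpans {d : ℕ} (V : Finset (Fin d → ℤ)) : Prop :=
  ∀ x : Fin d → ℝ, ∃ c : (Fin d → ℤ) → ℝ, (∀ v, 0 ≤ c v) ∧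
    x = ∑ v ∈ V, c v • (fun i => ((v i : ℤ) : ℝ))

lemma pairZ_neg {d : ℕ} (v m : Fin d → ℤ) : pairZ v (-m) = -pairZ v m := by
  simp [pairZ, mul_neg]

/-- If the group of lattice automorphisms `g ∈ GL_d(ℤ)` with `g(V) = V` has no nonzero
fixed vector in `ℝ^d`, then `V` is semisimple: every Demazure root `m` of `V` has `-m`
also a Demazure root of `V`. -/
theorem stmt3 {d : ℕ} (V : Finset (Fin d → ℤ)) (hV0 : (0 : Fin d → ℤ) ∉ V)
    (hVs : PosSpans V)
    (hfix : ∀ x : Fin d → ℝ,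
      (∀ g : Matrix (Fin d) (Fin d) ℤ, IsUnit g.det →
        (∀ v : Fin d → ℤ, v ∈ V ↔ g.mulVec v ∈ V) →
        (g.map (Int.cast : ℤ → ℝ)).mulVec x = x) → x = 0) :
    ∀ m, IsDemazureRoot V m → IsDemazureRoot V (-m) := by
  intro m hm
  obtain ⟨v, hvV, hvm, hpos⟩ := hm
  set σ : Fin d → ℤ := ∑ w ∈ V, w with hσdef
  -- σ is fixed by each g ∈ G (over ℤ)
  have hfixσ : ∀ g : Matrix (Fin d) (Fin d) ℤ, IsUnit g.det →
      (∀ w : Fin d → ℤ, w ∈ V ↔ g.mulVec w ∈ V) → g.mulVec σ = σ := by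
    intro g hg hgV
    have hinv : Invertible g := g.invertibleOfIsUnitDet hg
    have hinj : Function.Injective g.mulVec := by
      intro a b hab
      have : (⅟g * g).mulVec a = (⅟g * g).mulVec b := by
        rw [← Matrix.mulVec_mulVec, ← Matrix.mulVec_mulVec, hab]
      simpa using this
    have hmap : V.map ⟨g.mulVec, hinj⟩ = V := by
      apply Finset.eq_of_subset_of_card_le
      · intro w hw
        obtain ⟨u, hu, rfl⟩ := Finset.mem_map.mp hw
        exact (hgV u).mp hu
      · simp
    calc g.mulVec σ = ∑ w ∈ V, g.mulVec w := by
          simp only [hσdef, ← Matrix.mulVecLin_apply, map_sum]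
      _ = ∑ w ∈ V.map ⟨g.mulVec, hinj⟩, w := by
          rw [Finset.sum_map]; rfl
      _ = σ := by rw [hmap]
  -- hence σ = 0
  have hσ0 : σ = 0 := by
    have hreal : (fun i => ((σ i : ℤ) : ℝ)) = 0 := by
      apply hfix
      intro g hg hgV
      have h1 := hfixσ g hg hgV
      funext i
      have h2 := congrFun h1 i
      simp only [Matrix.mulVec, dotProduct] at h2
      simp only [Matrix.mulVec, dotProduct, Matrix.map_apply]
      push_cast
      exact_mod_cast congrArg (fun z : ℤ => (z : ℝ)) h2
    funext i
    have := congrFun hreal i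
    simp only [Pi.zero_apply] at this ⊢
    exact_mod_cast this
  -- the pairing sums to zero
  have hsum : ∑ w ∈ V, pairZ w m = 0 := by
    have h1 : pairZ σ m = 0 := by rw [hσ0]; simp [pairZ]
    rw [← h1]
    simp only [pairZ, hσdef, Finset.sum_apply, Finset.sum_mul]
    exact Finset.sum_comm
  have herase : ∑ w ∈ V.erase v, pairZ w m = 1 := by
    have h1 := Finset.add_sum_erase V (fun w => pairZ w m) hvV
    omega
  have hnn : ∀ w ∈ V.erase v, 0 ≤ pairZ w m := fun w hw =>
    hpos w (Finset.mem_of_mem_erase hw) (Finset.ne_of_mem_erase hw)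
  -- find the unique w with pairing 1
  obtain ⟨w, hwmem, hwge⟩ : ∃ w ∈ V.erase v, 1 ≤ pairZ w m := by
    by_contra h
    push_neg at h
    have : ∑ w ∈ V.erase v, pairZ w m ≤ 0 :=
      Finset.sum_nonpos (fun w hw => by have := h w hw; omega)
    omega
  have hw1 : pairZ w m = 1 := by
    have hle : pairZ w m ≤ ∑ x ∈ V.erase v, pairZ x m := Finset.single_le_sum hnn hwmem
    omega
  have hothers : ∀ u ∈ V.erase v, u ≠ w → pairZ u m = 0 := by
    intro u hu hune
    have h1 := Finset.add_sum_erase (V.erase v) (fun x => pairZ x m) hwmem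
    have hu' : u ∈ (V.erase v).erase w := Finset.mem_erase.mpr ⟨hune, hu⟩
    have h2 : pairZ u m ≤ ∑ x ∈ (V.erase v).erase w, pairZ x m :=
      Finset.single_le_sum (fun x hx => hnn x (Finset.mem_of_mem_erase hx)) hu'
    have h3 := hnn u hu
    omega
  -- conclude: -m is a root with witness w
  refine ⟨w, Finset.mem_of_mem_erase hwmem, ?_, ?_⟩
  · rw [pairZ_neg, hw1]
  · intro v' hv' hne
    rw [pairZ_neg]
    rcases eq_or_ne v' v with rfl | hvv
    · rw [hvm]; norm_num
    · have hv'e : v' ∈ V.erase v := Finset.mem_erase.mpr ⟨hvv, hv'⟩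
      rw [hothers v' hv'e hne]; norm_num
end

section
/- For every d-dimensional reflexive polytope P there exists a pairwise orthogonal set B of semisimple roots of P such that S = R ∩ lin_ℝ(B) (an S-root basis); in particular B is an ℝ-basis of lin_ℝ(S) and R ∩ lin_ℝ(S) = S, i.e., every root of P lying in the real linear span of the semisimple roots is itself semisimple. -/
open Finset Set Pointwise

noncomputable section

/-- The standard pairing `⟨x, y⟩ = ∑ i, x i * y i` on `ℝ^d`. -/
def pairR {d : ℕ} (x y : Fin d → ℝ) : ℝ := ∑ i, x i * y i

/-- A point of `ℝ^d` is a lattice point if all its coordinates are integers. -/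
def IsLatticePt {d : ℕ} (x : Fin d → ℝ) : Prop := ∀ i, ∃ n : ℤ, x i = (n : ℝ)

/-- A lattice polytope: the convex hull of finitely many lattice points. -/
def IsLatticePolytope {d : ℕ} (P : Set (Fin d → ℝ)) : Prop :=
  ∃ V : Finset (Fin d → ℝ), (∀ x ∈ V, IsLatticePt x) ∧
    P = convexHull ℝ (V : Set (Fin d → ℝ))

/-- The dual polytope `P* = {y : ⟨x, y⟩ ≥ -1 for all x ∈ P}`. -/
def polarDual {d : ℕ} (P : Set (Fin d → ℝ)) : Set (Fin d → ℝ) :=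
  {y | ∀ x ∈ P, -1 ≤ pairR x y}

/-- A reflexive polytope: a (full-dimensional) lattice polytope with `0` in its interior
whose dual is again a lattice polytope. -/
def IsReflexive {d : ℕ} (P : Set (Fin d → ℝ)) : Prop :=
  IsLatticePolytope P ∧ (0 : Fin d → ℝ) ∈ interior P ∧ IsLatticePolytope (polarDual P)

/-- `F` is the facet of `P` with (unique) inner normal `η` normalized by `⟨η, F⟩ = -1`:
`F` is the part of `P` where the valid inequality `⟨η, ·⟩ ≥ -1` is tight, and `F` has
dimension `d - 1`. -/
def IsFacetNormal {d : ℕ} (P : Set (Fin d → ℝ)) (η : Fin d → ℝ)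
    (F : Set (Fin d → ℝ)) : Prop :=
  (∀ x ∈ P, -1 ≤ pairR η x) ∧ F = {x ∈ P | pairR η x = -1} ∧ F.Nonempty ∧
    Module.finrank ℝ (vectorSpan ℝ F) = d - 1

/-- `F` is a facet ((d-1)-dimensional face) of `P`. -/
def IsFacet {d : ℕ} (P F : Set (Fin d → ℝ)) : Prop := ∃ η, IsFacetNormal P η F

/-- A root of `P`: a lattice point in the relative interior of a facet of `P`. -/
def IsRoot {d : ℕ} (P : Set (Fin d → ℝ)) (m : Fin d → ℝ) : Prop :=
  IsLatticePt m ∧ ∃ F, IsFacet P F ∧ m ∈ intrinsicInterior ℝ F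

/-- The facet `F_m` of `P` containing the root `m` in its relative interior
(for a root `m` there is exactly one such facet). -/
def rootFacet {d : ℕ} (P : Set (Fin d → ℝ)) (m : Fin d → ℝ) : Set (Fin d → ℝ) :=
  ⋃₀ {F | IsFacet P F ∧ m ∈ intrinsicInterior ℝ F}

/-- The inner normal `η_m = η_{F_m}` of the facet of `P` containing the root `m`. -/
def rootNormal {d : ℕ} (P : Set (Fin d → ℝ)) (m : Fin d → ℝ) : Fin d → ℝ :=
  Classical.epsilon fun η => IsFacetNormal P η (rootFacet P m)

/-- The real extension of the `ℤ`-linear map on the lattice given by an integer matrix. -/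
def intMatMap {d : ℕ} (A : Matrix (Fin d) (Fin d) ℤ) (x : Fin d → ℝ) : Fin d → ℝ :=
  (A.map (Int.cast : ℤ → ℝ)).mulVec x

/-- `P` and `Q` are isomorphic as lattice polytopes: some `g ∈ GL_d(ℤ)` has real
extension mapping `P` onto `Q`. -/
def IsLatticeIso {d : ℕ} (P Q : Set (Fin d → ℝ)) : Prop :=
  ∃ A : Matrix (Fin d) (Fin d) ℤ, IsUnit A.det ∧ intMatMap A '' P = Q

end

/-!
Let `W` be the (lattice) vertex set of the dual polytope. A root `m` pairs with its facet
normal `η_m` to `-1` and, by integrality, with every other `η ∈ W` to a nonnegative integer;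
a semisimple root `v` therefore pairs to `-1` with `η_v`, to `1` with `η_{-v}` and to `0`
with the rest of `W`, and points are determined by their pairings with `W`. Join `η_v` and
`η_{-v}` by an edge for every semisimple root `v`. The reflection
`x ↦ x - ⟨η_{-v} - η_v, x⟩ v` is a lattice automorphism of `P`, so it permutes the roots,
and reflecting shows that two edges `p — q — r` with `p ≠ r` produce the edge `p — r`: every
connected component of this graph is a complete graph. Fixing a representative `r` in each
component, the semisimple roots with normals `(p, r)`, `p ≠ r`, are pairwise orthogonal and
span all semisimple roots, since the one with normals `(p, q)` is the difference of those for
`(p, r)` and `(q, r)`. Finally, the sum of the pairings over a component vanishes on every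
semisimple root; for a root `m` in their span this forces the pairing profile of `m` to be
that of a semisimple root, so `m` is semisimple.
-/

open Topology

lemma Finset.exists_eq_one_of_sum_eq_zero {ι : Type*} [DecidableEq ι] {s : Finset ι}
    {g : ι → ℝ} {a : ι} (ha : a ∈ s) (hga : g a = -1) (hg : ∀ t ∈ s, t ≠ a → g t = 0 ∨ 1 ≤ g t)
    (hsum : ∑ t ∈ s, g t = 0) :
    ∃ b ∈ s, b ≠ a ∧ g b = 1 ∧ ∀ t ∈ s, t ≠ a → t ≠ b → g t = 0 := by
  have hnn : ∀ t ∈ s.erase a, 0 ≤ g t := fun t ht => by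
    rcases hg t (Finset.mem_of_mem_erase ht) (Finset.ne_of_mem_erase ht) with h | h <;> linarith
  have h1 : ∑ t ∈ s.erase a, g t = 1 := by
    rw [← Finset.sum_erase_add _ _ ha, hga] at hsum
    linarith
  obtain ⟨b, hb, hgb⟩ : ∃ b ∈ s.erase a, g b ≠ 0 := by
    by_contra! h
    rw [Finset.sum_eq_zero h] at h1
    norm_num at h1
  have hb1 := (hg b (Finset.mem_of_mem_erase hb) (Finset.ne_of_mem_erase hb)).resolve_left hgb
  have h2 : ∑ t ∈ (s.erase a).erase b, g t = 1 - g b := by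
    rw [← Finset.sum_erase_add _ _ hb] at h1
    linarith
  have hnn' : ∀ t ∈ (s.erase a).erase b, 0 ≤ g t := fun t ht =>
    hnn t (Finset.mem_of_mem_erase ht)
  have hgb1 : g b = 1 := by linarith [Finset.sum_nonneg hnn']
  refine ⟨b, Finset.mem_of_mem_erase hb, Finset.ne_of_mem_erase hb, hgb1,
    fun t ht hta htb => ?_⟩
  rw [hgb1, sub_self, Finset.sum_eq_zero_iff_of_nonneg hnn'] at h2
  exact h2 t (Finset.mem_erase.2 ⟨htb, Finset.mem_erase.2 ⟨hta, ht⟩⟩)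

section Pairing

variable {d : ℕ}

lemma pairR_eq_dotProduct (x y : Fin d → ℝ) : pairR x y = x ⬝ᵥ y := rfl

namespace IsLatticePt

variable {x y : Fin d → ℝ}

lemma exists_dotProduct_eq_intCast (hx : IsLatticePt x) (hy : IsLatticePt y) :
    ∃ n : ℤ, x ⬝ᵥ y = n := by
  choose a ha using hx
  choose b hb using hy
  exact ⟨∑ i, a i * b i, by simp [dotProduct, ha, hb]⟩

lemma sub (hx : IsLatticePt x) (hy : IsLatticePt y) : IsLatticePt (x - y) := fun i => by
  obtain ⟨a, ha⟩ := hx i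
  obtain ⟨b, hb⟩ := hy i
  exact ⟨a - b, by simp [ha, hb]⟩

lemma sub_intCast_smul (hx : IsLatticePt x) (hy : IsLatticePt y) (n : ℤ) :
    IsLatticePt (x - (n : ℝ) • y) := fun i => by
  obtain ⟨a, ha⟩ := hx i
  obtain ⟨b, hb⟩ := hy i
  exact ⟨a - n * b, by simp [ha, hb]⟩

end IsLatticePt

end Pairing

section Polar

variable {d : ℕ} {P : Set (Fin d → ℝ)} {x y : Fin d → ℝ}

lemma mem_polarDual_iff : y ∈ polarDual P ↔ ∀ x ∈ P, -1 ≤ y ⬝ᵥ x :=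
  forall₂_congr fun x _ => by rw [pairR_eq_dotProduct, dotProduct_comm]

theorem mem_iff_forall_mem_polarDual (hconv : Convex ℝ P) (hclosed : IsClosed P)
    (h0 : (0 : Fin d → ℝ) ∈ P) : x ∈ P ↔ ∀ y ∈ polarDual P, -1 ≤ y ⬝ᵥ x := by
  refine ⟨fun hx y hy => mem_polarDual_iff.1 hy x hx, fun h => ?_⟩
  by_contra hx
  obtain ⟨f, u, hfP, hfx⟩ := geometric_hahn_banach_closed_point hconv hclosed hx
  have hu : 0 < u := by simpa using hfP 0 h0
  set y := (dotProductEquiv ℝ (Fin d)).symm (-u⁻¹ • (f : Module.Dual ℝ (Fin d → ℝ)))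
  have hy : ∀ z, y ⬝ᵥ z = -(f z / u) := fun z => by
    rw [← dotProductEquiv_apply_apply ℝ, LinearEquiv.apply_symm_apply]
    simp [div_eq_inv_mul]
  have hyP : y ∈ polarDual P := mem_polarDual_iff.2 fun z hz => by
    rw [hy, neg_le_neg_iff, div_le_one hu]
    exact (hfP z hz).le
  have := h y hyP
  rw [hy, neg_le_neg_iff, div_le_one hu] at this
  linarith

end Polar

section Facets

variable {d : ℕ} {P F : Set (Fin d → ℝ)} {η m x y : Fin d → ℝ}

lemma dotProduct_eq_of_mem_intrinsicInterior {c : ℝ} (hm : m ∈ intrinsicInterior ℝ F)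
    (hx : x ∈ F) (hF : ∀ z ∈ F, c ≤ η ⬝ᵥ z) (hmc : η ⬝ᵥ m = c) : η ⬝ᵥ x = c := by
  obtain ⟨y, hy, rfl⟩ := hm
  have hmem : ∀ t : ℝ, t • ((y : Fin d → ℝ) - x) + y ∈ affineSpan ℝ F := fun t => by
    simpa [vsub_eq_sub, vadd_eq_add] using
      (affineSpan ℝ F).smul_vsub_vadd_mem t y.2 (subset_affineSpan ℝ F hx) y.2
  -- `y + t • (y - x)` stays in `F` for small `t > 0`, which forces `η ⬝ᵥ x ≤ c`
  let γ : ℝ → affineSpan ℝ F := fun t => ⟨_, hmem t⟩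
  have hγ : Continuous γ := by fun_prop
  have hγ0 : γ 0 = y := Subtype.ext (by simp [γ])
  have hev : ∀ᶠ t in 𝓝[>] (0 : ℝ), γ t ∈ interior ((↑) ⁻¹' F : Set (affineSpan ℝ F)) :=
    nhdsWithin_le_nhds (hγ.tendsto 0 (hγ0 ▸ isOpen_interior.mem_nhds hy))
  obtain ⟨t, htF, ht⟩ := (hev.and self_mem_nhdsWithin).exists
  have hle := hF _ (interior_subset (s := ((↑) ⁻¹' F : Set (affineSpan ℝ F))) htF)
  simp only [γ, dotProduct_add, dotProduct_smul, dotProduct_sub, hmc, smul_eq_mul] at hle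
  have := hF x hx
  nlinarith [show (0 : ℝ) < t from ht]

lemma vectorSpan_le_ker_dotProduct {c : ℝ} (hF : ∀ x ∈ F, η ⬝ᵥ x = c) :
    vectorSpan ℝ F ≤ LinearMap.ker (dotProductEquiv ℝ (Fin d) η) := by
  rw [vectorSpan_def, Submodule.span_le]
  rintro _ ⟨a, ha, b, hb, rfl⟩
  simp [hF a ha, hF b hb]

lemma eq_zero_of_le_ker_dotProduct {U : Submodule ℝ (Fin d → ℝ)}
    (hU : Module.finrank ℝ U = d - 1) (hmU : m ∉ U)
    (hUη : U ≤ LinearMap.ker (dotProductEquiv ℝ (Fin d) η)) (hηm : η ⬝ᵥ m = 0) : η = 0 := by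
  have hlt : U < U ⊔ Submodule.span ℝ {m} :=
    lt_of_le_of_ne le_sup_left fun h =>
      hmU (h ▸ Submodule.mem_sup_right (Submodule.mem_span_singleton_self m))
  have htop : U ⊔ Submodule.span ℝ {m} = ⊤ := by
    apply Submodule.eq_top_of_finrank_eq
    have h1 := Submodule.finrank_lt_finrank_of_lt hlt
    have h2 := Submodule.finrank_le (U ⊔ Submodule.span ℝ {m})
    rw [Module.finrank_fin_fun] at h2 ⊢
    omega
  have hker : LinearMap.ker (dotProductEquiv ℝ (Fin d) η) = ⊤ := by
    refine top_le_iff.1 (htop ▸ sup_le hUη ?_)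
    simpa [Submodule.span_le] using hηm
  have : η ∈ LinearMap.ker (dotProductEquiv ℝ (Fin d) η) := hker ▸ Submodule.mem_top
  simpa using this

lemma IsFacetNormal.subset (hF : IsFacetNormal P η F) : F ⊆ P := by
  rw [hF.2.1]
  exact Set.sep_subset _ _

lemma IsFacetNormal.subset_of_mem_intrinsicInterior {G : Set (Fin d → ℝ)}
    (hF : IsFacetNormal P η F) (hG : G ⊆ P) (hmG : m ∈ intrinsicInterior ℝ G) (hmF : m ∈ F) :
    G ⊆ F := by
  obtain ⟨hval, rfl, -, -⟩ := hF
  exact fun x hx => ⟨hG hx, dotProduct_eq_of_mem_intrinsicInterior hmG hx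
    (fun z hz => hval z (hG hz)) hmF.2⟩

lemma IsFacet.eq_of_mem_intrinsicInterior {F' : Set (Fin d → ℝ)} (hF : IsFacet P F)
    (hF' : IsFacet P F') (hm : m ∈ intrinsicInterior ℝ F) (hm' : m ∈ intrinsicInterior ℝ F') :
    F = F' := by
  obtain ⟨η, hη⟩ := hF
  obtain ⟨η', hη'⟩ := hF'
  exact (hη'.subset_of_mem_intrinsicInterior hη.subset hm
    (intrinsicInterior_subset hm')).antisymm
      (hη.subset_of_mem_intrinsicInterior hη'.subset hm' (intrinsicInterior_subset hm))

end Facets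

namespace IsRoot

variable {d : ℕ} {P : Set (Fin d → ℝ)} {m y : Fin d → ℝ}

lemma rootFacet_spec (hm : IsRoot P m) :
    IsFacetNormal P (rootNormal P m) (rootFacet P m) ∧
      m ∈ intrinsicInterior ℝ (rootFacet P m) := by
  obtain ⟨-, F, hF, hmF⟩ := hm
  have hFm : rootFacet P m = F := by
    have hset : {G | IsFacet P G ∧ m ∈ intrinsicInterior ℝ G} = {F} := by
      ext G
      exact ⟨fun hG => hG.1.eq_of_mem_intrinsicInterior hF hG.2 hmF,
        fun hG => hG ▸ ⟨hF, hmF⟩⟩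
    rw [rootFacet, hset, Set.sUnion_singleton]
  obtain ⟨η, hη⟩ := hF
  rw [rootNormal, hFm]
  exact ⟨Classical.epsilon_spec (p := fun η => IsFacetNormal P η F) ⟨η, hη⟩, hmF⟩

lemma mem_rootFacet (hm : IsRoot P m) : m ∈ rootFacet P m :=
  intrinsicInterior_subset hm.rootFacet_spec.2

lemma mem (hm : IsRoot P m) : m ∈ P :=
  hm.rootFacet_spec.1.subset hm.mem_rootFacet

lemma dotProduct_rootNormal_self (hm : IsRoot P m) : rootNormal P m ⬝ᵥ m = -1 := by
  have h := hm.mem_rootFacet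
  rw [hm.rootFacet_spec.1.2.1] at h
  exact h.2

lemma rootNormal_mem_polarDual (hm : IsRoot P m) : rootNormal P m ∈ polarDual P :=
  mem_polarDual_iff.2 hm.rootFacet_spec.1.1

lemma eq_rootNormal (hm : IsRoot P m) (hy : y ∈ polarDual P) (hym : y ⬝ᵥ m = -1) :
    y = rootNormal P m := by
  obtain ⟨⟨-, hF, -, hrank⟩, hmF⟩ := hm.rootFacet_spec
  have hηF : ∀ x ∈ rootFacet P m, rootNormal P m ⬝ᵥ x = -1 := fun x hx => (hF ▸ hx).2
  have hyF : ∀ x ∈ rootFacet P m, y ⬝ᵥ x = -1 := fun x hx =>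
    dotProduct_eq_of_mem_intrinsicInterior hmF hx
      (fun z hz => mem_polarDual_iff.1 hy z (hF ▸ hz).1) hym
  have hmU : m ∉ vectorSpan ℝ (rootFacet P m) := fun h => by
    simpa [hm.dotProduct_rootNormal_self] using vectorSpan_le_ker_dotProduct hηF h
  refine sub_eq_zero.1 (eq_zero_of_le_ker_dotProduct hrank hmU
    (vectorSpan_le_ker_dotProduct (c := 0) fun x hx => ?_) ?_)
  · rw [sub_dotProduct, hyF x hx, hηF x hx, sub_self]
  · rw [sub_dotProduct, hym, hm.dotProduct_rootNormal_self, sub_self]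

lemma map_linearEquiv (e : (Fin d → ℝ) ≃ₗ[ℝ] (Fin d → ℝ)) (he : ∀ x, e x ∈ P ↔ x ∈ P)
    (hL : ∀ x, IsLatticePt x → IsLatticePt (e x)) (hm : IsRoot P m) : IsRoot P (e m) := by
  obtain ⟨hmL, F, ⟨η, hval, rfl, hne, hrank⟩, hmF⟩ := hm
  set η' := (dotProductEquiv ℝ (Fin d)).symm
    (dotProductEquiv ℝ (Fin d) η ∘ₗ e.symm.toLinearMap)
  have hη' : ∀ x, pairR η' x = pairR η (e.symm x) := fun x => by
    rw [pairR_eq_dotProduct, ← dotProductEquiv_apply_apply ℝ, LinearEquiv.apply_symm_apply]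
    simp [pairR_eq_dotProduct]
  refine ⟨hL m hmL, e '' {x ∈ P | pairR η x = -1},
    ⟨η', fun x hx => ?_, ?_, hne.image e, ?_⟩, ?_⟩
  · rw [hη']
    exact hval _ ((he _).1 (by simpa using hx))
  · ext x
    rw [LinearEquiv.image_eq_preimage_symm]
    simp only [Set.mem_preimage, Set.mem_ofPred_eq, hη', ← he (e.symm x),
      LinearEquiv.apply_symm_apply]
  · have h := AffineMap.map_vectorSpan (e : (Fin d → ℝ) →ₗ[ℝ] (Fin d → ℝ)).toAffineMap
      (s := {x ∈ P | pairR η x = -1})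
    rw [LinearMap.toAffineMap_linear] at h
    erw [← h]
    exact (LinearEquiv.finrank_map_eq e _).trans hrank
  · rw [← LinearEquiv.coe_toAffineEquiv, AffineEquiv.intrinsicInterior_image]
    exact ⟨m, hmF, rfl⟩

end IsRoot

lemma linearIndependent_of_dotProduct_rootNormal_eq_zero {d : ℕ} {P B : Set (Fin d → ℝ)}
    (hB : ∀ b ∈ B, IsRoot P b)
    (horth : ∀ b ∈ B, ∀ b' ∈ B, b ≠ b' → rootNormal P b ⬝ᵥ b' = 0) :
    LinearIndependent ℝ (fun b : B => (b : Fin d → ℝ)) :=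
  .of_pairwise_dual_eq_zero_one _ (fun b => dotProductEquiv ℝ (Fin d) (-rootNormal P b))
    (fun b b' hne => by simp [horth b b.2 b' b'.2 (Subtype.coe_ne_coe.2 hne)])
    fun b => by simp [(hB b b.2).dotProduct_rootNormal_self]

section Semisimple

variable {d : ℕ} {P : Set (Fin d → ℝ)} {v x : Fin d → ℝ}

def IsSemisimpleRoot (P : Set (Fin d → ℝ)) (v : Fin d → ℝ) : Prop :=
  IsRoot P v ∧ IsRoot P (-v)

namespace IsSemisimpleRoot

lemma neg (hv : IsSemisimpleRoot P v) : IsSemisimpleRoot P (-v) :=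
  ⟨hv.2, (neg_neg v).symm ▸ hv.1⟩

lemma dotProduct_rootNormal_sub (hv : IsSemisimpleRoot P v) :
    (rootNormal P (-v) - rootNormal P v) ⬝ᵥ v = 2 := by
  have h := hv.2.dotProduct_rootNormal_self
  rw [dotProduct_neg] at h
  rw [sub_dotProduct, hv.1.dotProduct_rootNormal_self]
  linarith

lemma rootNormal_ne (hv : IsSemisimpleRoot P v) : rootNormal P v ≠ rootNormal P (-v) := by
  intro h
  have := hv.dotProduct_rootNormal_sub
  rw [h, sub_self, zero_dotProduct] at this
  norm_num at this

noncomputable def reflection (hv : IsSemisimpleRoot P v) : (Fin d → ℝ) ≃ₗ[ℝ] (Fin d → ℝ) :=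
  Module.reflection (f := dotProductEquiv ℝ (Fin d) (rootNormal P (-v) - rootNormal P v))
    (by simpa using hv.dotProduct_rootNormal_sub)

lemma reflection_apply (hv : IsSemisimpleRoot P v) (x : Fin d → ℝ) :
    hv.reflection x = x - ((rootNormal P (-v) - rootNormal P v) ⬝ᵥ x) • v := by
  simp [reflection, Module.reflection_apply]

lemma reflection_reflection (hv : IsSemisimpleRoot P v) (x : Fin d → ℝ) :
    hv.reflection (hv.reflection x) = x :=
  Module.involutive_reflection _ x

end IsSemisimpleRoot

end Semisimple

structure HasLatticePolarHull {d : ℕ} (P : Set (Fin d → ℝ)) (W : Finset (Fin d → ℝ)) :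
    Prop where
  convex : Convex ℝ P
  isCompact : IsCompact P
  zero_mem : (0 : Fin d → ℝ) ∈ P
  polarDual_eq : polarDual P = convexHull ℝ (W : Set (Fin d → ℝ))
  isLatticePt : ∀ η ∈ W, IsLatticePt η

lemma IsReflexive.exists_hasLatticePolarHull {d : ℕ} {P : Set (Fin d → ℝ)}
    (hP : IsReflexive P) : ∃ W, HasLatticePolarHull P W := by
  obtain ⟨⟨V, -, rfl⟩, h0, W, hW, hPW⟩ := hP
  exact ⟨W, convex_convexHull ℝ _, V.finite_toSet.isCompact_convexHull (𝕜 := ℝ),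
    interior_subset h0, hPW, hW⟩

namespace HasLatticePolarHull

variable {d : ℕ} {P : Set (Fin d → ℝ)} {W : Finset (Fin d → ℝ)} {η m v x y : Fin d → ℝ}

lemma mem_polarDual (hP : HasLatticePolarHull P W) (hη : η ∈ W) : η ∈ polarDual P := by
  rw [hP.polarDual_eq]
  exact subset_convexHull ℝ _ hη

lemma neg_one_le_dotProduct (hP : HasLatticePolarHull P W) (hη : η ∈ W) (hx : x ∈ P) :
    -1 ≤ η ⬝ᵥ x :=
  mem_polarDual_iff.1 (hP.mem_polarDual hη) x hx

lemma mem_iff (hP : HasLatticePolarHull P W) : x ∈ P ↔ ∀ η ∈ W, -1 ≤ η ⬝ᵥ x := by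
  rw [mem_iff_forall_mem_polarDual hP.convex hP.isCompact.isClosed hP.zero_mem,
    hP.polarDual_eq]
  refine ⟨fun h η hη => h η (subset_convexHull ℝ _ hη), fun h y hy => ?_⟩
  exact convexHull_min (t := {a | -1 ≤ a ⬝ᵥ x}) h
    (convex_halfSpace_ge ⟨fun a b => add_dotProduct a b x, fun c a => smul_dotProduct c a x⟩ _)
    hy

lemma eq_of_forall_dotProduct_eq (hP : HasLatticePolarHull P W)
    (h : ∀ η ∈ W, η ⬝ᵥ x = η ⬝ᵥ y) : x = y := by
  have hline : ∀ t : ℝ, t • (x - y) ∈ P := fun t => hP.mem_iff.2 fun η hη => by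
    rw [dotProduct_smul, dotProduct_sub, h η hη, sub_self, smul_zero]
    norm_num
  obtain ⟨C, hC⟩ := isBounded_iff_forall_norm_le.1 hP.isCompact.isBounded
  by_contra hne
  have hpos : 0 < ‖x - y‖ := norm_pos_iff.2 (sub_ne_zero.2 hne)
  have := hC _ (hline ((|C| + 1) / ‖x - y‖))
  rw [norm_smul, Real.norm_of_nonneg (by positivity), div_mul_cancel₀ _ hpos.ne'] at this
  linarith [le_abs_self C]

lemma rootNormal_mem (hP : HasLatticePolarHull P W) (hm : IsRoot P m) : rootNormal P m ∈ W := by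
  obtain ⟨η, hηW, hηm⟩ : ∃ η ∈ W, η ⬝ᵥ m ≤ -1 := by
    by_contra! h
    have := convexHull_min (t := {a | -1 < a ⬝ᵥ m}) h
      (convex_halfSpace_gt
        ⟨fun a b => add_dotProduct a b m, fun c a => smul_dotProduct c a m⟩ _)
      (hP.polarDual_eq ▸ hm.rootNormal_mem_polarDual)
    exact this.ne' hm.dotProduct_rootNormal_self
  rwa [← hm.eq_rootNormal (hP.mem_polarDual hηW)
    (hηm.antisymm (hP.neg_one_le_dotProduct hηW hm.mem))]

lemma dotProduct_eq_zero_or_one_le (hP : HasLatticePolarHull P W) (hm : IsRoot P m)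
    (hη : η ∈ W) (hne : η ≠ rootNormal P m) : η ⬝ᵥ m = 0 ∨ 1 ≤ η ⬝ᵥ m := by
  obtain ⟨n, hn⟩ := (hP.isLatticePt η hη).exists_dotProduct_eq_intCast hm.1
  have h1 := hP.neg_one_le_dotProduct hη hm.mem
  have h2 : η ⬝ᵥ m ≠ -1 := fun h => hne (hm.eq_rootNormal (hP.mem_polarDual hη) h)
  rw [hn] at h1 h2 ⊢
  have h1' : (-1 : ℤ) ≤ n := by exact_mod_cast h1
  have h2' : n ≠ -1 := by exact_mod_cast h2
  rcases (by omega : n = 0 ∨ 1 ≤ n) with h | h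
  · exact Or.inl (by simp [h])
  · exact Or.inr (by exact_mod_cast h)

lemma dotProduct_nonneg (hP : HasLatticePolarHull P W) (hm : IsRoot P m) (hη : η ∈ W)
    (hne : η ≠ rootNormal P m) : 0 ≤ η ⬝ᵥ m := by
  rcases hP.dotProduct_eq_zero_or_one_le hm hη hne with h | h <;> linarith

lemma dotProduct_semisimpleRoot (hP : HasLatticePolarHull P W) (hv : IsSemisimpleRoot P v)
    (hη : η ∈ W) :
    η ⬝ᵥ v =
      (if η = rootNormal P (-v) then 1 else 0) - (if η = rootNormal P v then 1 else 0) := by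
  have h1 := hv.1.dotProduct_rootNormal_self
  have h2 := hv.2.dotProduct_rootNormal_self
  rw [dotProduct_neg] at h2
  by_cases hη₁ : η = rootNormal P v
  · simp [hη₁, h1, hv.rootNormal_ne]
  by_cases hη₂ : η = rootNormal P (-v)
  · simp [hη₂, hv.rootNormal_ne.symm]
    linarith
  have := hP.dotProduct_nonneg hv.2 hη hη₂
  rw [dotProduct_neg] at this
  simp [hη₁, hη₂]
  linarith [hP.dotProduct_nonneg hv.1 hη hη₁]

lemma add_smul_mem (hP : HasLatticePolarHull P W) (hv : IsRoot P v) (hx : x ∈ P) {t : ℝ}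
    (ht0 : 0 ≤ t) (ht : t ≤ rootNormal P v ⬝ᵥ x + 1) : x + t • v ∈ P := by
  refine hP.mem_iff.2 fun η hη => ?_
  rw [dotProduct_add, dotProduct_smul, smul_eq_mul]
  by_cases he : η = rootNormal P v
  · rw [he, hv.dotProduct_rootNormal_self]
    linarith
  · nlinarith [hP.neg_one_le_dotProduct hη hx, hP.dotProduct_nonneg hv hη he]

lemma reflection_mem (hP : HasLatticePolarHull P W) (hv : IsSemisimpleRoot P v) (hx : x ∈ P) :
    hv.reflection x ∈ P := by
  have hα := hP.neg_one_le_dotProduct (hP.rootNormal_mem hv.1) hx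
  have hβ := hP.neg_one_le_dotProduct (hP.rootNormal_mem hv.2) hx
  rw [hv.reflection_apply, sub_dotProduct]
  rcases le_total (rootNormal P (-v) ⬝ᵥ x) (rootNormal P v ⬝ᵥ x) with h | h
  · rw [sub_eq_add_neg, ← neg_smul, neg_sub]
    exact hP.add_smul_mem hv.1 hx (by linarith) (by linarith)
  · rw [sub_eq_add_neg, ← smul_neg]
    exact hP.add_smul_mem hv.2 hx (by linarith) (by linarith)

lemma isRoot_reflection (hP : HasLatticePolarHull P W) (hv : IsSemisimpleRoot P v)
    (hm : IsRoot P m) : IsRoot P (hv.reflection m) := by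
  refine hm.map_linearEquiv _ (fun x => ⟨fun h => ?_, hP.reflection_mem hv⟩) fun x hx => ?_
  · simpa [hv.reflection_reflection] using hP.reflection_mem hv h
  · have hw := (hP.isLatticePt _ (hP.rootNormal_mem hv.2)).sub
      (hP.isLatticePt _ (hP.rootNormal_mem hv.1))
    obtain ⟨n, hn⟩ := hw.exists_dotProduct_eq_intCast hx
    rw [hv.reflection_apply, hn]
    exact hx.sub_intCast_smul hv.1.1 n

end HasLatticePolarHull

section Graph

variable {d : ℕ} {P : Set (Fin d → ℝ)} {W : Finset (Fin d → ℝ)} {p q r : Fin d → ℝ}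

def SemisimpleEdge (P : Set (Fin d → ℝ)) (p q : Fin d → ℝ) : Prop :=
  ∃ u, IsSemisimpleRoot P u ∧ rootNormal P u = p ∧ rootNormal P (-u) = q

noncomputable def edgeRoot (P : Set (Fin d → ℝ)) (p q : Fin d → ℝ) : Fin d → ℝ :=
  Classical.epsilon fun u => IsSemisimpleRoot P u ∧ rootNormal P u = p ∧ rootNormal P (-u) = q

namespace SemisimpleEdge

lemma edgeRoot_spec (h : SemisimpleEdge P p q) :
    IsSemisimpleRoot P (edgeRoot P p q) ∧ rootNormal P (edgeRoot P p q) = p ∧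
      rootNormal P (-edgeRoot P p q) = q :=
  Classical.epsilon_spec h

lemma symm (h : SemisimpleEdge P p q) : SemisimpleEdge P q p := by
  obtain ⟨u, hu, rfl, rfl⟩ := h
  exact ⟨-u, hu.neg, rfl, by rw [neg_neg]⟩

lemma ne (h : SemisimpleEdge P p q) : p ≠ q := by
  obtain ⟨u, hu, rfl, rfl⟩ := h
  exact hu.rootNormal_ne

lemma trans (hP : HasLatticePolarHull P W) (hpq : SemisimpleEdge P p q)
    (hqr : SemisimpleEdge P q r) (hpr : p ≠ r) : SemisimpleEdge P p r := by
  have hpq' := hpq.ne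
  have hqr' := hqr.ne
  obtain ⟨u, hu, rfl, rfl⟩ := hpq
  obtain ⟨w, hw, hwq, rfl⟩ := hqr
  have hpW := hP.rootNormal_mem hu.1
  have hqW := hP.rootNormal_mem hu.2
  have hrW := hP.rootNormal_mem hw.2
  -- reflecting `u` in `w` gives the semisimple root `u + w` joining `η_u` to `η_{-w}`
  have hsum : hw.reflection u = u + w := by
    rw [hw.reflection_apply, sub_dotProduct, hP.dotProduct_semisimpleRoot hu hrW,
      hP.dotProduct_semisimpleRoot hu (hwq ▸ hqW), hwq]
    simp [hpr.symm, hqr'.symm, hpq'.symm]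
  have hsum_neg : hw.reflection (-u) = -(u + w) := by rw [map_neg, hsum]
  have hroot := hsum ▸ hP.isRoot_reflection hw hu.1
  have hroot_neg := hsum_neg ▸ hP.isRoot_reflection hw hu.2
  refine ⟨u + w, ⟨hroot, hroot_neg⟩, (hroot.eq_rootNormal (hP.mem_polarDual hpW) ?_).symm,
    (hroot_neg.eq_rootNormal (hP.mem_polarDual hrW) ?_).symm⟩
  · rw [dotProduct_add, hu.1.dotProduct_rootNormal_self, hP.dotProduct_semisimpleRoot hw hpW,
      hwq]
    simp [hpr, hpq']
  · rw [dotProduct_neg, dotProduct_add, hP.dotProduct_semisimpleRoot hu hrW,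
      hP.dotProduct_semisimpleRoot hw hrW, hwq]
    simp [hpr.symm, hqr'.symm]

end SemisimpleEdge

def rootSetoid (hP : HasLatticePolarHull P W) : Setoid (Fin d → ℝ) where
  r p q := p = q ∨ SemisimpleEdge P p q
  iseqv.refl _ := Or.inl rfl
  iseqv.symm h := h.imp Eq.symm SemisimpleEdge.symm
  iseqv.trans {p _ r} h₁ h₂ := by
    rcases h₁ with rfl | h₁
    · exact h₂
    rcases h₂ with rfl | h₂
    · exact Or.inr h₁
    by_cases hpr : p = r
    · exact Or.inl hpr
    · exact Or.inr (h₁.trans hP h₂ hpr)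

end Graph

namespace HasLatticePolarHull

variable {d : ℕ} {P : Set (Fin d → ℝ)} {W : Finset (Fin d → ℝ)} {m p q u x : Fin d → ℝ}

noncomputable def classRep (hP : HasLatticePolarHull P W) (p : Fin d → ℝ) : Fin d → ℝ :=
  (Quotient.mk (rootSetoid hP) p).out

lemma classRep_rel (hP : HasLatticePolarHull P W) (p : Fin d → ℝ) :
    rootSetoid hP (hP.classRep p) p :=
  Quotient.mk_out p

lemma classRep_eq (hP : HasLatticePolarHull P W) (h : rootSetoid hP p q) :
    hP.classRep p = hP.classRep q :=
  congrArg Quotient.out (Quotient.sound h)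

lemma semisimpleEdge_classRep (hP : HasLatticePolarHull P W) (hp : p ≠ hP.classRep p) :
    SemisimpleEdge P p (hP.classRep p) :=
  ((hP.classRep_rel p).resolve_left hp.symm).symm

noncomputable def classRoot (hP : HasLatticePolarHull P W) (p : Fin d → ℝ) : Fin d → ℝ :=
  if p = hP.classRep p then 0 else edgeRoot P p (hP.classRep p)

lemma dotProduct_classRoot (hP : HasLatticePolarHull P W) {η : Fin d → ℝ} (hη : η ∈ W) :
    η ⬝ᵥ hP.classRoot p =
      (if η = hP.classRep p then 1 else 0) - (if η = p then 1 else 0) := by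
  by_cases hp : p = hP.classRep p
  · rw [classRoot, if_pos hp, ← hp, dotProduct_zero, sub_self]
  · obtain ⟨hu, hup, hur⟩ := (hP.semisimpleEdge_classRep hp).edgeRoot_spec
    rw [classRoot, if_neg hp, hP.dotProduct_semisimpleRoot hu hη, hup, hur]

noncomputable def rootBasis (hP : HasLatticePolarHull P W) : Finset (Fin d → ℝ) :=
  open Classical in (W.filter fun p => p ≠ hP.classRep p).image hP.classRoot

lemma mem_rootBasis (hP : HasLatticePolarHull P W) {b : Fin d → ℝ} :
    b ∈ hP.rootBasis ↔ ∃ p ∈ W, p ≠ hP.classRep p ∧ hP.classRoot p = b := by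
  simp [rootBasis, and_assoc]

lemma isSemisimpleRoot_classRoot (hP : HasLatticePolarHull P W) (hp : p ≠ hP.classRep p) :
    IsSemisimpleRoot P (hP.classRoot p) := by
  rw [classRoot, if_neg hp]
  exact (hP.semisimpleEdge_classRep hp).edgeRoot_spec.1

lemma rootNormal_classRoot (hP : HasLatticePolarHull P W) (hp : p ≠ hP.classRep p) :
    rootNormal P (hP.classRoot p) = p := by
  rw [classRoot, if_neg hp]
  exact (hP.semisimpleEdge_classRep hp).edgeRoot_spec.2.1

lemma isSemisimpleRoot_of_mem_rootBasis (hP : HasLatticePolarHull P W) {b : Fin d → ℝ}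
    (hb : b ∈ hP.rootBasis) : IsSemisimpleRoot P b := by
  obtain ⟨p, -, hp, rfl⟩ := hP.mem_rootBasis.1 hb
  exact hP.isSemisimpleRoot_classRoot hp

lemma classRoot_mem_span (hP : HasLatticePolarHull P W) (hp : p ∈ W) :
    hP.classRoot p ∈ Submodule.span ℝ (hP.rootBasis : Set (Fin d → ℝ)) := by
  by_cases h : p = hP.classRep p
  · rw [classRoot, if_pos h]
    exact Submodule.zero_mem _
  · exact Submodule.subset_span (hP.mem_rootBasis.2 ⟨p, hp, h, rfl⟩)

lemma mem_span_rootBasis (hP : HasLatticePolarHull P W) (hm : IsSemisimpleRoot P m) :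
    m ∈ Submodule.span ℝ (hP.rootBasis : Set (Fin d → ℝ)) := by
  have hpW := hP.rootNormal_mem hm.1
  have hqW := hP.rootNormal_mem hm.2
  have hrep := hP.classRep_eq (Or.inr ⟨m, hm, rfl, rfl⟩ : rootSetoid hP _ _)
  have hm_eq : m = hP.classRoot (rootNormal P m) - hP.classRoot (rootNormal P (-m)) :=
    hP.eq_of_forall_dotProduct_eq fun η hη => by
      rw [dotProduct_sub, hP.dotProduct_classRoot hη, hP.dotProduct_classRoot hη, hrep,
        hP.dotProduct_semisimpleRoot hm hη]
      ring
  rw [hm_eq]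
  exact Submodule.sub_mem _ (hP.classRoot_mem_span hpW) (hP.classRoot_mem_span hqW)

lemma dotProduct_rootNormal_eq_zero_of_mem_rootBasis (hP : HasLatticePolarHull P W)
    {b b' : Fin d → ℝ} (hb : b ∈ hP.rootBasis) (hb' : b' ∈ hP.rootBasis) (hne : b ≠ b') :
    rootNormal P b ⬝ᵥ b' = 0 := by
  obtain ⟨p, hpW, hp, rfl⟩ := hP.mem_rootBasis.1 hb
  obtain ⟨p', -, -, rfl⟩ := hP.mem_rootBasis.1 hb'
  have hpp' : p ≠ p' := fun h => hne (by rw [h])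
  have hpr : p ≠ hP.classRep p' := fun h => hp (by
    rw [h, hP.classRep_eq (hP.classRep_rel p')])
  rw [hP.rootNormal_classRoot hp, hP.dotProduct_classRoot hpW, if_neg hpr, if_neg hpp',
    sub_zero]

noncomputable def classSum (hP : HasLatticePolarHull P W) (p : Fin d → ℝ) :
    Module.Dual ℝ (Fin d → ℝ) :=
  open Classical in ∑ t ∈ W with rootSetoid hP t p, dotProductEquiv ℝ (Fin d) t

lemma classSum_apply (hP : HasLatticePolarHull P W) (p x : Fin d → ℝ) :
    open Classical in hP.classSum p x = ∑ t ∈ W with rootSetoid hP t p, t ⬝ᵥ x := by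
  simp [classSum]

lemma classSum_semisimpleRoot (hP : HasLatticePolarHull P W) (hu : IsSemisimpleRoot P u)
    (p : Fin d → ℝ) : hP.classSum p u = 0 := by
  classical
  have hrel : rootSetoid hP (rootNormal P u) (rootNormal P (-u)) := Or.inr ⟨u, hu, rfl, rfl⟩
  rw [classSum_apply, Finset.sum_congr rfl fun t ht =>
    hP.dotProduct_semisimpleRoot hu (Finset.mem_filter.1 ht).1, Finset.sum_sub_distrib,
    Finset.sum_ite_eq', Finset.sum_ite_eq']
  simp only [Finset.mem_filter, hP.rootNormal_mem hu.1, hP.rootNormal_mem hu.2, true_and]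
  have : rootSetoid hP (rootNormal P (-u)) p ↔ rootSetoid hP (rootNormal P u) p :=
    ⟨(rootSetoid hP).trans hrel, (rootSetoid hP).trans ((rootSetoid hP).symm hrel)⟩
  simp [this]

lemma classSum_eq_zero_of_mem_span (hP : HasLatticePolarHull P W)
    (hx : x ∈ Submodule.span ℝ {m | IsSemisimpleRoot P m}) (p : Fin d → ℝ) :
    hP.classSum p x = 0 :=
  (Submodule.span_le (p := LinearMap.ker (hP.classSum p)).2
    (fun _ hu => hP.classSum_semisimpleRoot hu p)) hx

lemma isSemisimpleRoot_of_classSum_eq_zero (hP : HasLatticePolarHull P W) (hm : IsRoot P m)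
    (h : ∀ p, hP.classSum p m = 0) : IsSemisimpleRoot P m := by
  classical
  -- in the class of `η_m` exactly one `q` pairs with `m` to `1`; then `m` pairs with `W` like
  -- the semisimple root joining `η_m` to `q`
  have hpW := hP.rootNormal_mem hm
  obtain ⟨q, hq, hqp, hqm, hzero⟩ := Finset.exists_eq_one_of_sum_eq_zero
    (s := W.filter (rootSetoid hP · (rootNormal P m))) (g := (· ⬝ᵥ m))
    (Finset.mem_filter.2 ⟨hpW, (rootSetoid hP).refl _⟩) hm.dotProduct_rootNormal_self
    (fun t ht hne => hP.dotProduct_eq_zero_or_one_le hm (Finset.mem_filter.1 ht).1 hne)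
    (by rw [← classSum_apply]; exact h _)
  obtain ⟨hqW, hqrel⟩ := Finset.mem_filter.1 hq
  obtain ⟨hu, hup, huq⟩ := (hqrel.resolve_left hqp).symm.edgeRoot_spec
  have hprofile : ∀ t ∈ W, t ≠ rootNormal P m → t ≠ q → t ⬝ᵥ m = 0 := fun t ht htp htq => by
    by_cases hrel : rootSetoid hP t (rootNormal P m)
    · exact hzero t (Finset.mem_filter.2 ⟨ht, hrel⟩) htp htq
    -- the class of `t` avoids `η_m`, so its pairings are nonnegative and sum to zero
    have hnn : ∀ s ∈ W.filter (rootSetoid hP · t), 0 ≤ s ⬝ᵥ m := fun s hs =>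
      hP.dotProduct_nonneg hm (Finset.mem_filter.1 hs).1
        fun hsp => hrel (by rw [← hsp]; exact (rootSetoid hP).symm (Finset.mem_filter.1 hs).2)
    refine (Finset.sum_eq_zero_iff_of_nonneg hnn).1 ?_ t
      (Finset.mem_filter.2 ⟨ht, (rootSetoid hP).refl t⟩)
    rw [← classSum_apply]
    exact h t
  have hm_eq : m = edgeRoot P (rootNormal P m) q := hP.eq_of_forall_dotProduct_eq fun t ht => by
    rw [hP.dotProduct_semisimpleRoot hu ht, hup, huq]
    by_cases htp : t = rootNormal P m
    · simp [htp, hqp.symm, hm.dotProduct_rootNormal_self]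
    by_cases htq : t = q
    · simp [htq, hqp, hqm]
    simp [htp, htq, hprofile t ht htp htq]
  exact hm_eq ▸ hu

lemma isSemisimpleRoot_of_mem_span (hP : HasLatticePolarHull P W) (hm : IsRoot P m)
    (hmS : m ∈ Submodule.span ℝ {m | IsSemisimpleRoot P m}) : IsSemisimpleRoot P m :=
  hP.isSemisimpleRoot_of_classSum_eq_zero hm (hP.classSum_eq_zero_of_mem_span hmS)

end HasLatticePolarHull

/-- Every reflexive polytope `P` admits an `S`-root basis: a pairwise orthogonal set `B`
of semisimple roots with `S = R ∩ lin_ℝ(B)`; in particular `B` is an `ℝ`-basis of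
`lin_ℝ(S)` and `R ∩ lin_ℝ(S) = S`. -/
theorem stmt7 {d : ℕ} (P : Set (Fin d → ℝ)) (hP : IsReflexive P) :
    ∃ B : Finset (Fin d → ℝ),
      (∀ b ∈ B, IsRoot P b ∧ IsRoot P (-b)) ∧
      (∀ b ∈ B, ∀ b' ∈ B, b ≠ b' →
        pairR (rootNormal P b) b' = 0 ∧ pairR (rootNormal P b') b = 0) ∧
      {m | IsRoot P m ∧ IsRoot P (-m)} =
        {m | IsRoot P m} ∩ ↑(Submodule.span ℝ (B : Set (Fin d → ℝ))) ∧
      LinearIndependent ℝ (fun x : ↥(B : Set (Fin d → ℝ)) => (x : Fin d → ℝ)) ∧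
      Submodule.span ℝ (B : Set (Fin d → ℝ)) =
        Submodule.span ℝ {m | IsRoot P m ∧ IsRoot P (-m)} ∧
      {m | IsRoot P m} ∩ ↑(Submodule.span ℝ {m | IsRoot P m ∧ IsRoot P (-m)}) =
        {m | IsRoot P m ∧ IsRoot P (-m)} := by
  obtain ⟨W, hP⟩ := hP.exists_hasLatticePolarHull
  set B := hP.rootBasis
  have hBS : ∀ b ∈ B, IsSemisimpleRoot P b := fun _ => hP.isSemisimpleRoot_of_mem_rootBasis
  have horth : ∀ b ∈ B, ∀ b' ∈ B, b ≠ b' → rootNormal P b ⬝ᵥ b' = 0 :=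
    fun _ hb _ hb' => hP.dotProduct_rootNormal_eq_zero_of_mem_rootBasis hb hb'
  have hspan : Submodule.span ℝ (B : Set (Fin d → ℝ)) =
      Submodule.span ℝ {m | IsSemisimpleRoot P m} :=
    (Submodule.span_mono hBS).antisymm (Submodule.span_le.2 fun _ => hP.mem_span_rootBasis)
  have hclosed : {m | IsRoot P m} ∩ ↑(Submodule.span ℝ {m | IsSemisimpleRoot P m}) =
      {m | IsSemisimpleRoot P m} :=
    Set.Subset.antisymm (fun _ ⟨hm, hmS⟩ => hP.isSemisimpleRoot_of_mem_span hm hmS)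
      fun _ hm => ⟨hm.1, Submodule.subset_span hm⟩
  refine ⟨B, hBS, fun b hb b' hb' hne => ⟨horth b hb b' hb' hne, horth b' hb' b hb hne.symm⟩,
    by rw [hspan, hclosed]; rfl,
    linearIndependent_of_dotProduct_rootNormal_eq_zero (fun b hb => (hBS b hb).1) horth,
    hspan, hclosed⟩
end
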